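/- Let E_1, E_2 > 0 with E_1 + E_2 = 1, let B_1, B_2 be independent Beta(1, M-1) random variables with M = 3, and p uniform on (0,1) independent of them. Define E_1' = E_1 - (1-p)E_1 B_1 + p E_2 B_2. Then there exists a constant c > 0 such that P(E_1' < ε) ≤ c ε^3 for all ε ∈ (0,1). -/

import Mathlib

/-!
Since `E₁' = E₁ (1 - B₁) + p (E₁ B₁ + E₂ B₂) = E₁ (1 - p)(1 - B₁) + E₁ p + p E₂ B₂` with all
terms nonnegative, `E₁' < ε` forces both `p < δ` and `1 - B₁ < δ`, where `δ = ε / E₁`.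
By independence the probability of this event is `P(B₁ > 1 - δ) P(p < δ)`; the Beta(1, 2)
density `2 (1 - x)` is at most `2δ` on `(1 - δ, 1)`, so `P(B₁ > 1 - δ) ≤ 2δ²`, and `P(p < δ) ≤ δ`.
-/

open MeasureTheory ProbabilityTheory Real Set Filter
open scoped ENNReal

noncomputable def betaMeasure (a b : ℝ) : Measure ℝ :=
  (volume.restrict (Set.Ioo (0:ℝ) 1)).withDensity
    (fun x => ENNReal.ofReal (Real.Gamma (a + b) / (Real.Gamma a * Real.Gamma b)
      * x ^ (a - 1) * (1 - x) ^ (b - 1)))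

lemma ae_mem_Ioo_betaMeasure (a b : ℝ) : ∀ᵐ x ∂_root_.betaMeasure a b, x ∈ Ioo (0 : ℝ) 1 :=
  (withDensity_absolutelyContinuous _ _).ae_le (ae_restrict_mem measurableSet_Ioo)

lemma betaMeasure_one_two :
    _root_.betaMeasure 1 2 = (volume.restrict (Ioo (0 : ℝ) 1)).withDensity
      (fun x => ENNReal.ofReal (2 * (1 - x))) := by
  have hΓ : Gamma (1 + 2) / (Gamma 1 * Gamma 2) = 2 := by
    rw [show (1 + 2 : ℝ) = (2 : ℕ) + 1 by norm_num, Gamma_nat_eq_factorial, Gamma_one, Gamma_two]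
    norm_num
  simp only [_root_.betaMeasure, hΓ, sub_self, rpow_zero, show (2 - 1 : ℝ) = 1 by norm_num, rpow_one,
    mul_one]

lemma betaMeasure_one_two_Ioi_le {δ : ℝ} (hδ : 0 ≤ δ) :
    _root_.betaMeasure 1 2 (Ioi (1 - δ)) ≤ ENNReal.ofReal (2 * δ ^ 2) := by
  rw [betaMeasure_one_two, withDensity_apply _ measurableSet_Ioi,
    Measure.restrict_restrict measurableSet_Ioi]
  calc ∫⁻ x in Ioi (1 - δ) ∩ Ioo 0 1, ENNReal.ofReal (2 * (1 - x))
      ≤ ∫⁻ _ in Ioi (1 - δ) ∩ Ioo 0 1, ENNReal.ofReal (2 * δ) :=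
        setLIntegral_mono measurable_const fun x hx =>
          ENNReal.ofReal_le_ofReal (by linarith [hx.1.out])
    _ ≤ ENNReal.ofReal (2 * δ) * volume (Ioo (1 - δ) 1) := by
        rw [setLIntegral_const]
        gcongr
        exact fun x hx => ⟨hx.1, hx.2.2⟩
    _ = ENNReal.ofReal (2 * δ ^ 2) := by
        rw [Real.volume_Ioo, ← ENNReal.ofReal_mul (by positivity)]
        ring_nf

lemma volume_restrict_Ioo_Iio_le (δ : ℝ) :
    volume.restrict (Ioo (0 : ℝ) 1) (Iio δ) ≤ ENNReal.ofReal δ := by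
  rw [Measure.restrict_apply measurableSet_Iio]
  calc volume (Iio δ ∩ Ioo 0 1) ≤ volume (Ioo 0 δ) := measure_mono fun x hx => ⟨hx.2.1, hx.1⟩
    _ = ENNReal.ofReal δ := by rw [Real.volume_Ioo, sub_zero]

lemma one_sub_div_lt_and_lt_div_of_exchange_lt {E₁ E₂ b₁ b₂ p ε : ℝ} (hE₁ : 0 < E₁) (hE₂ : 0 ≤ E₂)
    (hb₁ : b₁ ∈ Icc (0 : ℝ) 1) (hb₂ : 0 ≤ b₂) (hp : p ∈ Icc (0 : ℝ) 1)
    (h : E₁ - (1 - p) * E₁ * b₁ + p * E₂ * b₂ < ε) : 1 - ε / E₁ < b₁ ∧ p < ε / E₁ := by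
  obtain ⟨hb₁0, hb₁1⟩ := hb₁
  obtain ⟨hp0, hp1⟩ := hp
  have h₁ : 0 ≤ E₁ * (1 - p) * (1 - b₁) := by
    have : 0 ≤ 1 - p := by linarith
    have : 0 ≤ 1 - b₁ := by linarith
    positivity
  have h₂ : 0 ≤ E₁ * p * b₁ := by positivity
  have h₃ : 0 ≤ p * E₂ * b₂ := by positivity
  refine ⟨?_, (lt_div_iff₀' hE₁).2 (by linarith)⟩
  have : 1 - b₁ < ε / E₁ := (lt_div_iff₀' hE₁).2 (by linarith)
  linarith

theorem stmt8_general {Ω : Type*} [MeasurableSpace Ω] (P : Measure Ω) [IsProbabilityMeasure P]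
    (E1 E2 : ℝ) (hE1 : 0 < E1) (hE2 : 0 < E2)
    (B1 B2 p : Ω → ℝ)
    (hmB1 : Measurable B1) (hmB2 : Measurable B2) (hmp : Measurable p)
    (hindep : iIndepFun ![B1, B2, p] P)
    (hB1 : P.map B1 = _root_.betaMeasure 1 2)
    (hB2 : P.map B2 = _root_.betaMeasure 1 2)
    (hp : P.map p = volume.restrict (Set.Ioo (0 : ℝ) 1))
    (E1' : Ω → ℝ)
    (hE1' : E1' = fun ω => E1 - (1 - p ω) * E1 * B1 ω + p ω * E2 * B2 ω) :
    ∃ c > 0, ∀ ε ∈ Set.Ioo (0 : ℝ) 1,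
      P {ω | E1' ω < ε} ≤ ENNReal.ofReal (c * ε ^ 3) := by
  refine ⟨2 / E1 ^ 3, by positivity, fun ε hε => ?_⟩
  set δ := ε / E1
  have hB1_mem : ∀ᵐ ω ∂P, B1 ω ∈ Ioo (0 : ℝ) 1 :=
    ae_of_ae_map hmB1.aemeasurable (hB1 ▸ ae_mem_Ioo_betaMeasure 1 2)
  have hB2_mem : ∀ᵐ ω ∂P, B2 ω ∈ Ioo (0 : ℝ) 1 :=
    ae_of_ae_map hmB2.aemeasurable (hB2 ▸ ae_mem_Ioo_betaMeasure 1 2)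
  have hp_mem : ∀ᵐ ω ∂P, p ω ∈ Ioo (0 : ℝ) 1 :=
    ae_of_ae_map hmp.aemeasurable (hp ▸ ae_restrict_mem measurableSet_Ioo)
  have hsub : ({ω | E1' ω < ε} : Set Ω) ≤ᵐ[P] (B1 ⁻¹' Ioi (1 - δ) ∩ p ⁻¹' Iio δ : Set Ω) := by
    filter_upwards [hB1_mem, hB2_mem, hp_mem] with ω hb₁ hb₂ hpω hlt
    subst hE1'
    exact one_sub_div_lt_and_lt_div_of_exchange_lt hE1 hE2.le (Ioo_subset_Icc_self hb₁) hb₂.1.le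
      (Ioo_subset_Icc_self hpω) hlt
  have hindep_B1_p : IndepFun B1 p P := by simpa using hindep.indepFun (i := 0) (j := 2) (by decide)
  calc P {ω | E1' ω < ε} ≤ P ((B1 ⁻¹' Ioi (1 - δ)) ∩ (p ⁻¹' Iio δ)) := measure_mono_ae hsub
    _ = _root_.betaMeasure 1 2 (Ioi (1 - δ)) * volume.restrict (Ioo (0 : ℝ) 1) (Iio δ) := by
        rw [hindep_B1_p.measure_inter_preimage_eq_mul _ _ measurableSet_Ioi measurableSet_Iio,
          ← hB1, ← hp, Measure.map_apply hmB1 measurableSet_Ioi,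
          Measure.map_apply hmp measurableSet_Iio]
    _ ≤ ENNReal.ofReal (2 * δ ^ 2) * ENNReal.ofReal δ := by
        have : 0 ≤ δ := by have := hε.1; positivity
        gcongr
        exacts [betaMeasure_one_two_Ioi_le this, volume_restrict_Ioo_Iio_le δ]
    _ = ENNReal.ofReal (2 / E1 ^ 3 * ε ^ 3) := by
        rw [← ENNReal.ofReal_mul (by positivity)]
        congr 1
        simp only [δ, div_pow]
        field_simp

/-- For M = 3, P(E₁' < ε) ≤ c ε³ for some constant c > 0. -/
theorem stmt8 {Ω : Type*} [MeasurableSpace Ω] (P : Measure Ω) [IsProbabilityMeasure P]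
    (E1 E2 : ℝ) (hE1 : 0 < E1) (hE2 : 0 < E2) (hsum : E1 + E2 = 1)
    (B1 B2 p : Ω → ℝ)
    (hmB1 : Measurable B1) (hmB2 : Measurable B2) (hmp : Measurable p)
    (hindep : iIndepFun ![B1, B2, p] P)
    (hB1 : P.map B1 = _root_.betaMeasure 1 2)
    (hB2 : P.map B2 = _root_.betaMeasure 1 2)
    (hp : P.map p = volume.restrict (Set.Ioo (0 : ℝ) 1))
    (E1' : Ω → ℝ)
    (hE1' : E1' = fun ω => E1 - (1 - p ω) * E1 * B1 ω + p ω * E2 * B2 ω) :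
    ∃ c > 0, ∀ ε ∈ Set.Ioo (0 : ℝ) 1,
      P {ω | E1' ω < ε} ≤ ENNReal.ofReal (c * ε ^ 3) :=
  stmt8_general P E1 E2 hE1 hE2 B1 B2 p hmB1 hmB2 hmp hindep hB1 hB2 hp E1' hE1'
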